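/- arXiv:2309.03680 — 4 statements merged into one kernel-verified Lean document; each statement's English description precedes it below -/
import Mathlib

section
/- Every subalgebra of the Lie algebra R(L) is of the form R_U for some subalgebra U of L, and every ideal of R(L) is of the form R_U for some ideal U of L. -/
namespace LeibnizPaper

variable {F L : Type*} [Field F] [AddCommGroup L] [Module F L]

/-- The right Leibniz identity. -/
def IsRightLeibniz (br : L →ₗ[F] L →ₗ[F] L) : Prop :=
  ∀ x y z : L, br x (br y z) = br (br x y) z - br (br x z) y

/-- The left Leibniz identity. -/
def IsLeftLeibniz (br : L →ₗ[F] L →ₗ[F] L) : Prop :=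
  ∀ x y z : L, br x (br y z) = br (br x y) z + br y (br x z)

/-- Symmetric Leibniz algebra: both identities together with `[[x,y],[x,y]] = 0`. -/
def IsSymmetricLeibniz (br : L →ₗ[F] L →ₗ[F] L) : Prop :=
  IsRightLeibniz br ∧ IsLeftLeibniz br ∧ ∀ x y : L, br (br x y) (br x y) = 0

def IsSubalg (br : L →ₗ[F] L →ₗ[F] L) (U : Submodule F L) : Prop :=
  ∀ x ∈ U, ∀ y ∈ U, br x y ∈ U

def IsIdeal (br : L →ₗ[F] L →ₗ[F] L) (U : Submodule F L) : Prop :=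
  ∀ x ∈ U, ∀ y : L, br x y ∈ U ∧ br y x ∈ U

/-- `U` is an ideal of the subalgebra `A`. -/
def IsIdealIn (br : L →ₗ[F] L →ₗ[F] L) (A U : Submodule F L) : Prop :=
  U ≤ A ∧ ∀ x ∈ U, ∀ y ∈ A, br x y ∈ U ∧ br y x ∈ U

/-- The subspace spanned by all products of an element of `A` with an element of `B`. -/
def brSpan (br : L →ₗ[F] L →ₗ[F] L) (A B : Submodule F L) : Submodule F L :=
  Submodule.span F {z | ∃ a ∈ A, ∃ b ∈ B, z = br a b}

def derSeries (br : L →ₗ[F] L →ₗ[F] L) (U : Submodule F L) : ℕ → Submodule F L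
  | 0 => U
  | n+1 => brSpan br (derSeries br U n) (derSeries br U n)

def lcSeries (br : L →ₗ[F] L →ₗ[F] L) (U : Submodule F L) : ℕ → Submodule F L
  | 0 => U
  | n+1 => brSpan br (lcSeries br U n) U

def IsSolvable (br : L →ₗ[F] L →ₗ[F] L) (U : Submodule F L) : Prop :=
  ∃ n, derSeries br U n = ⊥

def IsNilpotentSub (br : L →ₗ[F] L →ₗ[F] L) (U : Submodule F L) : Prop :=
  ∃ n, lcSeries br U n = ⊥

/-- `G` is the radical (largest solvable ideal). -/
def IsRadical (br : L →ₗ[F] L →ₗ[F] L) (G : Submodule F L) : Prop :=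
  IsIdeal br G ∧ IsSolvable br G ∧ ∀ J, IsIdeal br J → IsSolvable br J → J ≤ G

/-- `G` is the radical of the subalgebra `A`. -/
def IsRadicalIn (br : L →ₗ[F] L →ₗ[F] L) (A G : Submodule F L) : Prop :=
  IsIdealIn br A G ∧ IsSolvable br G ∧ ∀ J, IsIdealIn br A J → IsSolvable br J → J ≤ G

/-- `N` is the nilradical (largest nilpotent ideal). -/
def IsNilradical (br : L →ₗ[F] L →ₗ[F] L) (N : Submodule F L) : Prop :=
  IsIdeal br N ∧ IsNilpotentSub br N ∧ ∀ J, IsIdeal br J → IsNilpotentSub br J → J ≤ N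

/-- The subalgebra `S` is semisimple: it has no nonzero solvable ideals. -/
def IsSemisimpleIn (br : L →ₗ[F] L →ₗ[F] L) (S : Submodule F L) : Prop :=
  ∀ J, IsIdealIn br S J → IsSolvable br J → J = ⊥

/-- The Leibniz kernel `I`, the span of all squares. -/
def kernelIdeal (br : L →ₗ[F] L →ₗ[F] L) : Submodule F L :=
  Submodule.span F {y | ∃ x, y = br x x}

def IsMaxSubalg (br : L →ₗ[F] L →ₗ[F] L) (M : Submodule F L) : Prop :=
  IsSubalg br M ∧ M ≠ ⊤ ∧ ∀ M', IsSubalg br M' → M ≤ M' → M' ≠ ⊤ → M' = M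

/-- `φ(L) = 0`: every ideal contained in all maximal subalgebras is trivial. -/
def IsPhiFree (br : L →ₗ[F] L →ₗ[F] L) : Prop :=
  ∀ J, IsIdeal br J → (∀ M, IsMaxSubalg br M → J ≤ M) → J = ⊥

/-- `P` is the Frattini ideal: the largest ideal contained in every maximal subalgebra. -/
def IsFrattiniIdeal (br : L →ₗ[F] L →ₗ[F] L) (P : Submodule F L) : Prop :=
  IsIdeal br P ∧ (∀ M, IsMaxSubalg br M → P ≤ M) ∧
    ∀ J, IsIdeal br J → (∀ M, IsMaxSubalg br M → J ≤ M) → J ≤ P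

/-- `A` is invariant under left and right multiplication by elements of `Sg`. -/
def IsSubBimodule (br : L →ₗ[F] L →ₗ[F] L) (Sg A : Submodule F L) : Prop :=
  ∀ a ∈ A, ∀ s ∈ Sg, br a s ∈ A ∧ br s a ∈ A

/-- `L = N ∔ Sg` with `Sg` a Lie subalgebra and the nilradical `N` a completely
reducible `Sg`-bimodule. -/
def IsAlmostReductive (br : L →ₗ[F] L →ₗ[F] L) (N Sg : Submodule F L) : Prop :=
  IsNilradical br N ∧ IsSubalg br Sg ∧ (∀ x ∈ Sg, br x x = 0) ∧
    N ⊓ Sg = ⊥ ∧ N ⊔ Sg = ⊤ ∧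
    ∀ A ≤ N, IsSubBimodule br Sg A → ∃ B ≤ N, IsSubBimodule br Sg B ∧ A ⊓ B = ⊥ ∧ A ⊔ B = N

def IsAbelianSub (br : L →ₗ[F] L →ₗ[F] L) (U : Submodule F L) : Prop :=
  ∀ x ∈ U, ∀ y ∈ U, br x y = 0

def IsMinAbelianIdeal (br : L →ₗ[F] L →ₗ[F] L) (A : Submodule F L) : Prop :=
  IsIdeal br A ∧ A ≠ ⊥ ∧ IsAbelianSub br A ∧
    ∀ B, IsIdeal br B → B ≤ A → B ≠ ⊥ → B = A

/-- The abelian socle: the sum of the minimal abelian ideals. -/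
def abelianSocle (br : L →ₗ[F] L →ₗ[F] L) : Submodule F L :=
  sSup {A | IsMinAbelianIdeal br A}

/-- An algebra is almost algebraic if the algebra of its right multiplication operators
contains the semisimple and nilpotent Jordan components of each of its elements. -/
def IsAlmostAlgebraicBr (br : L →ₗ[F] L →ₗ[F] L) : Prop :=
  ∀ f ∈ Set.range br.flip, ∃ s ∈ Set.range br.flip, ∃ n ∈ Set.range br.flip,
    f = s + n ∧ Module.End.IsSemisimple s ∧ IsNilpotent n ∧ Commute s n

/-- Every nilpotent subalgebra is abelian. -/
def IsAAlgebra (br : L →ₗ[F] L →ₗ[F] L) : Prop :=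
  ∀ U, IsSubalg br U → IsNilpotentSub br U → IsAbelianSub br U

/-- The commutator bracket, as a bilinear map on an associative algebra. -/
def commBr (F E : Type*) [Field F] [Ring E] [Algebra F E] : E →ₗ[F] E →ₗ[F] E :=
  LinearMap.mul F E - (LinearMap.mul F E).flip

theorem subalg_ideal_of_RL (br : L →ₗ[F] L →ₗ[F] L) (h : IsRightLeibniz br)
    (K : Submodule F (Module.End F L))
    (hK : (K : Set (Module.End F L)) ⊆ Set.range (br.flip : L →ₗ[F] Module.End F L)) :
    ((∀ f ∈ K, ∀ g ∈ K, ⁅f, g⁆ ∈ K) →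
        ∃ U : Submodule F L, IsSubalg br U ∧ K = Submodule.map br.flip U) ∧
    ((∀ f ∈ K, ∀ g ∈ Set.range (br.flip : L →ₗ[F] Module.End F L), ⁅f, g⁆ ∈ K ∧ ⁅g, f⁆ ∈ K) →
        ∃ U : Submodule F L, IsIdeal br U ∧ K = Submodule.map br.flip U) := by
  have key : ∀ y z : L, br.flip (br y z) = ⁅br.flip z, br.flip y⁆ := by
    intro y z
    ext x
    simp only [LinearMap.flip_apply, LieHom.lie_apply, Module.End.lie_apply, Ring.lie_def,
      LinearMap.sub_apply, Module.End.mul_apply]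
    rw [h x y z]
  have hKmap : K = Submodule.map br.flip (Submodule.comap br.flip K) := by
    rw [Submodule.map_comap_eq]
    refine le_antisymm (fun f hf => ?_) inf_le_right
    exact ⟨by simpa using hK hf, hf⟩
  constructor
  · intro hsub
    refine ⟨Submodule.comap br.flip K, ?_, hKmap⟩
    intro x hx y hy
    have : br.flip (br x y) ∈ K := by
      rw [key]
      exact hsub _ hy _ hx
    exact this
  · intro hideal
    refine ⟨Submodule.comap br.flip K, ?_, hKmap⟩
    intro x hx y
    constructor
    · show br.flip (br x y) ∈ K
      rw [key]
      exact (hideal _ hx _ ⟨y, rfl⟩).2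
    · show br.flip (br y x) ∈ K
      rw [key]
      exact (hideal _ hx _ ⟨y, rfl⟩).1

end LeibnizPaper
end

section
/- Let L be a Leibniz algebra over a field of characteristic zero and I its Leibniz kernel. If every element x of L is L-split (i.e., there exist s,n ∈ L such that R_x = R_s + R_n is the Jordan decomposition of R_x into semisimple and nilpotent parts), then for any x the images R_{s+I} and R_{n+I} in L/I give the Jordan decomposition of R_{x+I}, and hence L/I is an almost-algebraic Lie algebra. -/
namespace LeibnizPaper

variable {F L : Type*} [Field F] [AddCommGroup L] [Module F L]

private lemma pow_comm_aux {F L M : Type*} [Field F] [AddCommGroup L] [Module F L]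
    [AddCommGroup M] [Module F M] {π : L →ₗ[F] M}
    {f : Module.End F L} {g : Module.End F M}
    (hc : ∀ y, g (π y) = π (f y)) (k : ℕ) : ∀ y, (g ^ k) (π y) = π ((f ^ k) y) := by
  induction k with
  | zero => simp
  | succ k ih =>
    intro y
    rw [pow_succ, pow_succ]
    simp only [Module.End.mul_apply]
    rw [hc, ih]

private lemma aeval_comm_aux {F L M : Type*} [Field F] [AddCommGroup L] [Module F L]
    [AddCommGroup M] [Module F M] {π : L →ₗ[F] M}
    {f : Module.End F L} {g : Module.End F M}
    (hc : ∀ y, g (π y) = π (f y)) (p : Polynomial F) :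
    ∀ y, (Polynomial.aeval g p) (π y) = π ((Polynomial.aeval f p) y) := by
  induction p using Polynomial.induction_on' with
  | add p q hp hq => intro y; simp [hp y, hq y]
  | monomial n a =>
    intro y
    simp only [Polynomial.aeval_monomial, Module.End.mul_apply,
      LinearMap.smul_apply, Module.algebraMap_end_apply, LinearMap.map_smul]
    rw [pow_comm_aux hc n y]

theorem split_implies_almostAlgebraic [CharZero F] [FiniteDimensional F L]
    (br : L →ₗ[F] L →ₗ[F] L) (h : IsRightLeibniz br)
    (brQ : (L ⧸ kernelIdeal br) →ₗ[F] (L ⧸ kernelIdeal br) →ₗ[F] (L ⧸ kernelIdeal br))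
    (hbrQ : ∀ x y : L, brQ ((kernelIdeal br).mkQ x) ((kernelIdeal br).mkQ y) = (kernelIdeal br).mkQ (br x y))
    (hsplit : ∀ x : L, ∃ s n : L, br.flip x = br.flip s + br.flip n ∧
      Module.End.IsSemisimple (br.flip s) ∧ IsNilpotent (br.flip n : Module.End F L) ∧
      Commute (br.flip s : Module.End F L) (br.flip n)) :
    (∀ x s n : L,
      (br.flip x = br.flip s + br.flip n ∧ Module.End.IsSemisimple (br.flip s) ∧
        IsNilpotent (br.flip n : Module.End F L) ∧
        Commute (br.flip s : Module.End F L) (br.flip n)) →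
      (brQ.flip ((kernelIdeal br).mkQ x) = brQ.flip ((kernelIdeal br).mkQ s) + brQ.flip ((kernelIdeal br).mkQ n) ∧
        Module.End.IsSemisimple (brQ.flip ((kernelIdeal br).mkQ s)) ∧
        IsNilpotent (brQ.flip ((kernelIdeal br).mkQ n) : Module.End F (L ⧸ kernelIdeal br)) ∧
        Commute (brQ.flip ((kernelIdeal br).mkQ s) : Module.End F (L ⧸ kernelIdeal br)) (brQ.flip ((kernelIdeal br).mkQ n)))) ∧
    IsAlmostAlgebraicBr brQ := by
  have hsurj : Function.Surjective (kernelIdeal br).mkQ := Submodule.mkQ_surjective _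
  have hcomm : ∀ x y : L, (brQ.flip ((kernelIdeal br).mkQ x)) ((kernelIdeal br).mkQ y)
      = (kernelIdeal br).mkQ ((br.flip x) y) := by
    intro x y
    simp only [LinearMap.flip_apply]
    exact hbrQ y x
  have main : ∀ x s n : L,
      (br.flip x = br.flip s + br.flip n ∧ Module.End.IsSemisimple (br.flip s) ∧
        IsNilpotent (br.flip n : Module.End F L) ∧
        Commute (br.flip s : Module.End F L) (br.flip n)) →
      (brQ.flip ((kernelIdeal br).mkQ x) = brQ.flip ((kernelIdeal br).mkQ s) + brQ.flip ((kernelIdeal br).mkQ n) ∧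
        Module.End.IsSemisimple (brQ.flip ((kernelIdeal br).mkQ s)) ∧
        IsNilpotent (brQ.flip ((kernelIdeal br).mkQ n) : Module.End F (L ⧸ kernelIdeal br)) ∧
        Commute (brQ.flip ((kernelIdeal br).mkQ s) : Module.End F (L ⧸ kernelIdeal br)) (brQ.flip ((kernelIdeal br).mkQ n))) := by
    intro x s n ⟨hadd, hss, hnil, hcom⟩
    refine ⟨?_, ?_, ?_, ?_⟩
    · ext z
      have hy := LinearMap.congr_fun hadd z
      simp only [LinearMap.add_apply, LinearMap.comp_apply] at hy ⊢
      rw [hcomm, hcomm, hcomm, hy, map_add]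
    · have hsf : Squarefree (minpoly F (br.flip s)) := hss.minpoly_squarefree
      apply Module.End.isSemisimple_of_squarefree_aeval_eq_zero hsf
      ext z
      simp only [LinearMap.comp_apply, LinearMap.zero_apply, LinearMap.zero_comp]
      rw [aeval_comm_aux (hcomm s) (minpoly F (br.flip s)) z, minpoly.aeval]
      simp
    · obtain ⟨k, hk⟩ := hnil
      refine ⟨k, ?_⟩
      ext z
      simp only [LinearMap.comp_apply, LinearMap.zero_apply, LinearMap.zero_comp]
      rw [pow_comm_aux (hcomm n) k z, hk]
      simp
    · have hcom' : br.flip s * br.flip n = br.flip n * br.flip s := hcom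
      ext z
      have hy := LinearMap.congr_fun hcom' z
      simp only [Module.End.mul_apply, LinearMap.comp_apply] at hy ⊢
      rw [hcomm, hcomm, hcomm, hcomm, hy]
  refine ⟨main, ?_⟩
  intro f hf
  obtain ⟨z, rfl⟩ := hf
  obtain ⟨x, rfl⟩ := hsurj z
  obtain ⟨s, n, hx⟩ := hsplit x
  obtain ⟨h1, h2, h3, h4⟩ := main x s n hx
  exact ⟨_, ⟨(kernelIdeal br).mkQ s, rfl⟩, _, ⟨(kernelIdeal br).mkQ n, rfl⟩, h1, h2, h3, h4⟩

end LeibnizPaper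
end

section
/- Every φ-free Leibniz algebra over a field of characteristic zero is almost reductive: if φ(L) = 0 then L = N(L) ∔ V where V is a Lie subalgebra acting completely reducibly on N(L) and N(L) = Asoc(L). -/
namespace LeibnizPaper

variable {F L : Type*} [Field F] [AddCommGroup L] [Module F L]

section Helpers

variable (br : L →ₗ[F] L →ₗ[F] L)

lemma mem_brSpan {A B : Submodule F L} {a b : L} (ha : a ∈ A) (hb : b ∈ B) :
    br a b ∈ brSpan br A B :=
  Submodule.subset_span ⟨a, ha, b, hb, rfl⟩

lemma brSpan_le {A B C : Submodule F L} :
    brSpan br A B ≤ C ↔ ∀ a ∈ A, ∀ b ∈ B, br a b ∈ C := by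
  constructor
  · intro h a ha b hb; exact h (mem_brSpan br ha hb)
  · intro hc
    apply Submodule.span_le.2
    rintro z ⟨a, ha, b, hb, rfl⟩
    exact hc a ha b hb

lemma brSpan_mono {A B A' B' : Submodule F L} (hA : A ≤ A') (hB : B ≤ B') :
    brSpan br A B ≤ brSpan br A' B' :=
  (brSpan_le br).2 fun a ha b hb => mem_brSpan br (hA ha) (hB hb)

lemma brSpan_sup_left {X Y Z : Submodule F L} :
    brSpan br (X ⊔ Y) Z ≤ brSpan br X Z ⊔ brSpan br Y Z := by
  refine (brSpan_le br).2 fun a ha b hb => ?_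
  obtain ⟨x, hx, y, hy, rfl⟩ := Submodule.mem_sup.1 ha
  rw [map_add, LinearMap.add_apply]
  exact add_mem (Submodule.mem_sup_left (mem_brSpan br hx hb))
    (Submodule.mem_sup_right (mem_brSpan br hy hb))

lemma isIdeal_bot : IsIdeal br ⊥ := by
  intro x hx y
  simp only [Submodule.mem_bot] at hx
  subst hx
  simp

lemma isIdeal_inf {J K : Submodule F L} (hJ : IsIdeal br J) (hK : IsIdeal br K) :
    IsIdeal br (J ⊓ K) := fun x hx y =>
  ⟨⟨(hJ x hx.1 y).1, (hK x hx.2 y).1⟩, ⟨(hJ x hx.1 y).2, (hK x hx.2 y).2⟩⟩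

lemma isIdeal_sup {J K : Submodule F L} (hJ : IsIdeal br J) (hK : IsIdeal br K) :
    IsIdeal br (J ⊔ K) := by
  intro x hx y
  obtain ⟨a, ha, b, hb, rfl⟩ := Submodule.mem_sup.1 hx
  constructor
  · rw [map_add, LinearMap.add_apply]
    exact add_mem (Submodule.mem_sup_left (hJ a ha y).1) (Submodule.mem_sup_right (hK b hb y).1)
  · rw [map_add]
    exact add_mem (Submodule.mem_sup_left (hJ a ha y).2) (Submodule.mem_sup_right (hK b hb y).2)

lemma isSubalg_of_isIdeal {J : Submodule F L} (hJ : IsIdeal br J) : IsSubalg br J :=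
  fun a ha b _ => (hJ a ha b).1

lemma br_br_left (h : IsRightLeibniz br) (x y z : L) :
    br (br x y) z = br x (br y z) + br (br x z) y := by
  rw [h x y z]; abel

lemma isIdeal_brSpan_self (h : IsRightLeibniz br) {J : Submodule F L}
    (hJ : IsIdeal br J) : IsIdeal br (brSpan br J J) := by
  intro x hx y
  constructor
  · induction hx using Submodule.span_induction with
    | mem z hz =>
      obtain ⟨a, ha, b, hb, rfl⟩ := hz
      rw [br_br_left br h a b y]
      exact add_mem (mem_brSpan br ha (hJ b hb y).1) (mem_brSpan br (hJ a ha y).1 hb)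
    | zero => simp
    | add u v _ _ ihu ihv => rw [map_add, LinearMap.add_apply]; exact add_mem ihu ihv
    | smul t u _ ihu => rw [map_smul, LinearMap.smul_apply]; exact Submodule.smul_mem _ _ ihu
  · induction hx using Submodule.span_induction with
    | mem z hz =>
      obtain ⟨a, ha, b, hb, rfl⟩ := hz
      rw [h y a b]
      exact sub_mem (mem_brSpan br (hJ a ha y).2 hb) (mem_brSpan br (hJ b hb y).2 ha)
    | zero => simp
    | add u v _ _ ihu ihv => rw [map_add]; exact add_mem ihu ihv
    | smul t u _ ihu => rw [map_smul]; exact Submodule.smul_mem _ _ ihu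

lemma lcSeries_zero (U : Submodule F L) : lcSeries br U 0 = U := rfl

lemma lcSeries_succ (U : Submodule F L) (n : ℕ) :
    lcSeries br U (n+1) = brSpan br (lcSeries br U n) U := rfl

lemma lcSeries_le_self {U : Submodule F L} (hU : IsSubalg br U) :
    ∀ n, lcSeries br U n ≤ U
  | 0 => le_rfl
  | n+1 => (brSpan_le br).2 fun a ha b hb => hU a (lcSeries_le_self hU n ha) b hb

lemma lcSeries_mul (h : IsRightLeibniz br) (U : Submodule F L) :
    ∀ q p, brSpan br (lcSeries br U p) (lcSeries br U q) ≤ lcSeries br U (p + q + 1) := by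
  intro q
  induction q with
  | zero => intro p; exact le_rfl
  | succ q ih =>
    intro p
    refine (brSpan_le br).2 fun u hu x hx => ?_
    have hx' : x ∈ Submodule.span F {z | ∃ a ∈ lcSeries br U q, ∃ b ∈ U, z = br a b} := hx
    clear hx
    induction hx' using Submodule.span_induction with
    | mem z hz =>
      obtain ⟨a, ha, b, hb, rfl⟩ := hz
      rw [h u a b]
      have t1 : br (br u a) b ∈ lcSeries br U (p + q + 1 + 1) :=
        mem_brSpan br (ih p (mem_brSpan br hu ha)) hb
      have t2 : br (br u b) a ∈ lcSeries br U (p + 1 + q + 1) :=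
        ih (p+1) (mem_brSpan br (mem_brSpan br hu hb : br u b ∈ lcSeries br U (p+1)) ha)
      have e1 : p + q + 1 + 1 = p + (q+1) + 1 := by omega
      have e2 : p + 1 + q + 1 = p + (q+1) + 1 := by omega
      rw [e1] at t1; rw [e2] at t2
      exact sub_mem t1 t2
    | zero => simp
    | add y z _ _ ihy ihz => rw [map_add]; exact add_mem ihy ihz
    | smul t y _ ihy => rw [map_smul]; exact Submodule.smul_mem _ _ ihy

end Helpers

section Helpers2

variable (br : L →ₗ[F] L →ₗ[F] L)

def normalizer (C : Submodule F L) : Submodule F L where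
  carrier := {x | ∀ c ∈ C, br x c ∈ C ∧ br c x ∈ C}
  add_mem' := by
    intro a b ha hb c hc
    constructor
    · rw [map_add, LinearMap.add_apply]; exact add_mem (ha c hc).1 (hb c hc).1
    · rw [map_add]; exact add_mem (ha c hc).2 (hb c hc).2
  zero_mem' := by intro c hc; constructor <;> simp
  smul_mem' := by
    intro t a ha c hc
    constructor
    · rw [map_smul, LinearMap.smul_apply]; exact Submodule.smul_mem _ _ (ha c hc).1
    · rw [map_smul]; exact Submodule.smul_mem _ _ (ha c hc).2

lemma mem_normalizer {C : Submodule F L} {x : L} :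
    x ∈ normalizer br C ↔ ∀ c ∈ C, br x c ∈ C ∧ br c x ∈ C := Iff.rfl

lemma isSubalg_normalizer (h : IsRightLeibniz br) (C : Submodule F L) :
    IsSubalg br (normalizer br C) := by
  intro x hx y hy c hc
  constructor
  · rw [br_br_left br h x y c]
    exact add_mem (hx _ (hy c hc).1).1 (hy _ (hx c hc).1).2
  · rw [h c x y]
    exact sub_mem (hy _ (hx c hc).2).2 (hx _ (hy c hc).2).2

lemma isSubalg_bot : IsSubalg br ⊥ := by
  intro x hx y hy
  simp only [Submodule.mem_bot] at hx; subst hx; simp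

lemma isSubalg_top : IsSubalg br ⊤ := fun _ _ _ _ => Submodule.mem_top

lemma isSubalg_inf {A B : Submodule F L} (hA : IsSubalg br A) (hB : IsSubalg br B) :
    IsSubalg br (A ⊓ B) := fun x hx y hy => ⟨hA x hx.1 y hy.1, hB x hx.2 y hy.2⟩

lemma isSubalg_sup_ideal {M E : Submodule F L} (hM : IsSubalg br M) (hE : IsIdeal br E) :
    IsSubalg br (M ⊔ E) := by
  intro x hx y hy
  obtain ⟨m, hm, e, he, rfl⟩ := Submodule.mem_sup.1 hx
  obtain ⟨m', hm', e', he', rfl⟩ := Submodule.mem_sup.1 hy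
  rw [map_add, map_add br m e, LinearMap.add_apply, LinearMap.add_apply]
  exact add_mem (add_mem (Submodule.mem_sup_left (hM m hm m' hm'))
      (Submodule.mem_sup_right (hE e he m').1))
    (add_mem (Submodule.mem_sup_right (hE e' he' m).2)
      (Submodule.mem_sup_right (hE e he e').1))

lemma exists_minimal_ideal [FiniteDimensional F L] {J : Submodule F L}
    (hJ : IsIdeal br J) (hne : J ≠ ⊥) :
    ∃ D, D ≤ J ∧ IsIdeal br D ∧ D ≠ ⊥ ∧ ∀ B, IsIdeal br B → B ≤ D → B ≠ ⊥ → B = D := by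
  suffices H : ∀ n (J : Submodule F L), Module.finrank F J ≤ n → IsIdeal br J → J ≠ ⊥ →
      ∃ D, D ≤ J ∧ IsIdeal br D ∧ D ≠ ⊥ ∧ ∀ B, IsIdeal br B → B ≤ D → B ≠ ⊥ → B = D by
    exact H (Module.finrank F J) J le_rfl hJ hne
  intro n
  induction n with
  | zero =>
    intro J hr hJ hne
    exact absurd (Submodule.finrank_eq_zero.1 (Nat.le_zero.1 hr)) hne
  | succ n ih =>
    intro J hr hJ hne
    by_cases hmin : ∀ B, IsIdeal br B → B ≤ J → B ≠ ⊥ → B = J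
    · exact ⟨J, le_rfl, hJ, hne, hmin⟩
    · push_neg at hmin
      obtain ⟨B, hBi, hBle, hBne, hBne'⟩ := hmin
      have hlt : B < J := lt_of_le_of_ne hBle hBne'
      have hfr : Module.finrank F B ≤ n := by
        have := Submodule.finrank_lt_finrank_of_lt hlt; omega
      obtain ⟨D, h1, h2, h3, h4⟩ := ih B hfr hBi hBne
      exact ⟨D, h1.trans hBle, h2, h3, h4⟩

lemma isIdeal_sSup {S : Set (Submodule F L)} (hS : ∀ A ∈ S, IsIdeal br A) :
    IsIdeal br (sSup S) := by
  let T : Submodule F L :=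
    { carrier := {x | ∀ y : L, br x y ∈ sSup S ∧ br y x ∈ sSup S}
      add_mem' := by
        intro a b ha hb y
        constructor
        · rw [map_add, LinearMap.add_apply]; exact add_mem (ha y).1 (hb y).1
        · rw [map_add]; exact add_mem (ha y).2 (hb y).2
      zero_mem' := by intro y; constructor <;> simp
      smul_mem' := by
        intro t a ha y
        constructor
        · rw [map_smul, LinearMap.smul_apply]; exact Submodule.smul_mem _ _ (ha y).1
        · rw [map_smul]; exact Submodule.smul_mem _ _ (ha y).2 }
  have hle : sSup S ≤ T := sSup_le fun A hA a ha y =>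
    ⟨le_sSup hA (hS A hA a ha y).1, le_sSup hA (hS A hA a ha y).2⟩
  intro x hx y
  exact hle hx y

lemma sSup_br_zero_left {S : Set (Submodule F L)} {j : L}
    (hS : ∀ A ∈ S, ∀ a ∈ A, br a j = 0) : ∀ x ∈ sSup S, br x j = 0 := by
  have hle : sSup S ≤ LinearMap.ker (br.flip j) := sSup_le fun A hA a ha => by
    simp only [LinearMap.mem_ker, LinearMap.flip_apply]
    exact hS A hA a ha
  intro x hx
  simpa only [LinearMap.mem_ker, LinearMap.flip_apply] using hle hx

lemma sSup_br_zero_right {S : Set (Submodule F L)} {j : L}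
    (hS : ∀ A ∈ S, ∀ a ∈ A, br j a = 0) : ∀ x ∈ sSup S, br j x = 0 := by
  have hle : sSup S ≤ LinearMap.ker (br j) := sSup_le fun A hA a ha => by
    simp only [LinearMap.mem_ker]
    exact hS A hA a ha
  intro x hx
  simpa only [LinearMap.mem_ker] using hle hx

lemma minAbelian_pair_zero {A B : Submodule F L}
    (hA : IsMinAbelianIdeal br A) (hB : IsMinAbelianIdeal br B) :
    ∀ a ∈ A, ∀ b ∈ B, br a b = 0 := by
  intro a ha b hb
  by_cases hAB : A ⊓ B = ⊥
  · have hm : br a b ∈ A ⊓ B := ⟨(hA.1 a ha b).1, (hB.1 b hb a).2⟩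
    rw [hAB] at hm; simpa using hm
  · have heq : A ⊓ B = A := hA.2.2.2 (A ⊓ B) (isIdeal_inf br hA.1 hB.1) inf_le_left hAB
    have hAle : A ≤ B := by rw [← heq]; exact inf_le_right
    exact hB.2.2.1 a (hAle ha) b hb

lemma asoc_ideal : IsIdeal br (abelianSocle br) :=
  isIdeal_sSup br fun _ hA => hA.1

lemma asoc_abelian : IsAbelianSub br (abelianSocle br) := by
  intro x hx y hy
  have step1 : ∀ A ∈ {A | IsMinAbelianIdeal br A}, ∀ a ∈ A, br a y = 0 := by
    intro A hA a ha
    exact sSup_br_zero_right br (fun B hB b hb => minAbelian_pair_zero br hA hB a ha b hb) y hy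
  exact sSup_br_zero_left br step1 x hx

lemma nilpotent_of_abelian {U : Submodule F L} (hU : IsAbelianSub br U) :
    IsNilpotentSub br U := by
  refine ⟨1, le_bot_iff.1 ?_⟩
  exact (brSpan_le br).2 fun a ha b hb => by
    rw [hU a ha b hb]; exact Submodule.zero_mem ⊥

lemma asoc_nilpotent : IsNilpotentSub br (abelianSocle br) :=
  nilpotent_of_abelian br (asoc_abelian br)

lemma br_sq_zero (h : IsRightLeibniz br) (y x : L) : br y (br x x) = 0 := by
  have := h y x x; simpa using this

lemma br_ker_right (h : IsRightLeibniz br) (u : L) :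
    ∀ v ∈ kernelIdeal br, br u v = 0 := by
  intro v hv
  have hle : kernelIdeal br ≤ LinearMap.ker (br u) := Submodule.span_le.2 (by
    rintro z ⟨x, rfl⟩
    simp only [SetLike.mem_coe, LinearMap.mem_ker]
    exact br_sq_zero br h u x)
  simpa only [LinearMap.mem_ker] using hle hv

lemma mem_ker_symm (x y : L) : br x y + br y x ∈ kernelIdeal br := by
  have heq : br x y + br y x = br (x+y) (x+y) - br x x - br y y := by
    simp only [map_add, LinearMap.add_apply]; abel
  rw [heq]
  exact sub_mem (sub_mem (Submodule.subset_span ⟨_, rfl⟩) (Submodule.subset_span ⟨_, rfl⟩))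
    (Submodule.subset_span ⟨_, rfl⟩)

lemma kernel_isIdeal (h : IsRightLeibniz br) : IsIdeal br (kernelIdeal br) := by
  intro v hv y
  constructor
  · induction hv using Submodule.span_induction with
    | mem z hz =>
      obtain ⟨x, rfl⟩ := hz
      rw [br_br_left br h x x y]
      exact mem_ker_symm br x (br x y)
    | zero => simp
    | add a b _ _ iha ihb => rw [map_add, LinearMap.add_apply]; exact add_mem iha ihb
    | smul t a _ iha => rw [map_smul, LinearMap.smul_apply]; exact Submodule.smul_mem _ _ iha
  · rw [br_ker_right br h y v hv]; exact Submodule.zero_mem _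

lemma kernel_abelian (h : IsRightLeibniz br) : IsAbelianSub br (kernelIdeal br) :=
  fun u _ v hv => br_ker_right br h u v hv

end Helpers2

section Helpers3

variable (br : L →ₗ[F] L →ₗ[F] L)

lemma brSpan_self_le_max (h : IsRightLeibniz br) {J : Submodule F L}
    (hJ : IsIdeal br J) (hnil : IsNilpotentSub br J)
    {M : Submodule F L} (hM : IsMaxSubalg br M) : brSpan br J J ≤ M := by
  classical
  by_cases hJM : J ≤ M
  · exact (brSpan_le br).2 fun a ha b hb => hM.1 a (hJM ha) b (hJM hb)
  · set C := M ⊓ J with hCdef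
    obtain ⟨n, hn⟩ := hnil
    have hex : ∃ k, lcSeries br J k ≤ C := ⟨n, by rw [hn]; exact bot_le⟩
    set k := Nat.find hex with hk
    have hkC : lcSeries br J k ≤ C := Nat.find_spec hex
    have hk0 : k ≠ 0 := by
      intro h0
      apply hJM
      have h1 : lcSeries br J 0 ≤ C := h0 ▸ hkC
      rw [lcSeries_zero] at h1
      exact h1.trans inf_le_left
    have hkm : ¬ lcSeries br J (k-1) ≤ C := Nat.find_min hex (by omega)
    -- M normalizes C
    have hMN : M ≤ normalizer br C := by
      intro m hm c hc
      exact ⟨⟨hM.1 m hm c hc.1, (hJ c hc.2 m).2⟩, ⟨hM.1 c hc.1 m hm, (hJ c hc.2 m).1⟩⟩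
    -- lc (k-1) normalizes C
    have harith : k - 1 + 0 + 1 = k := by omega
    have harith2 : 0 + (k-1) + 1 = k := by omega
    have hlcN : lcSeries br J (k-1) ≤ normalizer br C := by
      intro x hx c hc
      constructor
      · apply hkC
        have hcc : c ∈ lcSeries br J 0 := hc.2
        have h2 := lcSeries_mul br h J 0 (k-1) (mem_brSpan br hx hcc)
        rw [harith] at h2
        exact h2
      · apply hkC
        have hcc : c ∈ lcSeries br J 0 := hc.2
        have h2 := lcSeries_mul br h J (k-1) 0 (mem_brSpan br hcc hx)
        rw [harith2] at h2
        exact h2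
    have hJsub : IsSubalg br J := isSubalg_of_isIdeal br hJ
    have hNz : normalizer br C = ⊤ := by
      by_contra hne
      have hNM : normalizer br C = M := hM.2.2 _ (isSubalg_normalizer br h C) hMN hne
      obtain ⟨x, hx, hxc⟩ := SetLike.not_le_iff_exists.1 hkm
      have hxM : x ∈ M := by rw [← hNM]; exact hlcN hx
      have hxJ : x ∈ J := lcSeries_le_self br hJsub (k-1) hx
      exact hxc ⟨hxM, hxJ⟩
    have hCid : IsIdeal br C := by
      intro c hc y
      have hy : y ∈ normalizer br C := by rw [hNz]; trivial
      exact ⟨(hy c hc).2, (hy c hc).1⟩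
    -- E argument
    set E := brSpan br J J ⊔ C with hEdef
    have hEid : IsIdeal br E := isIdeal_sup br (isIdeal_brSpan_self br h hJ) hCid
    have hEJ : E ≤ J := sup_le ((brSpan_le br).2 fun a ha b hb => (hJ a ha b).1) inf_le_right
    have hEneJ : E ≠ J := by
      intro hEq
      have key : ∀ m, J ≤ lcSeries br J m ⊔ C := by
        intro m
        induction m with
        | zero => rw [lcSeries_zero]; exact le_sup_left
        | succ m ih =>
          have step1 : brSpan br J J ≤ lcSeries br J (m+1) ⊔ C := by
            calc brSpan br J J ≤ brSpan br (lcSeries br J m ⊔ C) J :=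
                  brSpan_mono br ih le_rfl
              _ ≤ brSpan br (lcSeries br J m) J ⊔ brSpan br C J := brSpan_sup_left br
              _ ≤ lcSeries br J (m+1) ⊔ C := by
                  apply sup_le_sup
                  · rw [lcSeries_succ]
                  · exact (brSpan_le br).2 fun c hc b _ => (hCid c hc b).1
          calc J = E := hEq.symm
            _ = brSpan br J J ⊔ C := rfl
            _ ≤ (lcSeries br J (m+1) ⊔ C) ⊔ C := sup_le_sup_right step1 C
            _ = lcSeries br J (m+1) ⊔ C := by rw [sup_assoc, sup_idem]
      have hfin := key n
      rw [hn, bot_sup_eq] at hfin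
      exact hJM (hfin.trans inf_le_left)
    have hME : M ⊔ E ≠ ⊤ := by
      intro htop
      apply hEneJ
      have hEC : C ≤ E := le_sup_right
      have hmod : (E ⊔ M) ⊓ J = E ⊔ (M ⊓ J) := sup_inf_assoc_of_le M hEJ
      have : J = E := by
        calc J = ⊤ ⊓ J := (top_inf_eq J).symm
          _ = (E ⊔ M) ⊓ J := by rw [sup_comm E M, htop]
          _ = E ⊔ (M ⊓ J) := hmod
          _ = E := sup_eq_left.2 hEC
      exact this.symm
    have hMEM : M ⊔ E = M := hM.2.2 (M ⊔ E) (isSubalg_sup_ideal br hM.1 hEid) le_sup_left hME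
    calc brSpan br J J ≤ E := le_sup_left
      _ ≤ M ⊔ E := le_sup_right
      _ = M := hMEM

lemma nilpotent_ideal_abelian (h : IsRightLeibniz br) (hphi : IsPhiFree br)
    {J : Submodule F L} (hJ : IsIdeal br J) (hnil : IsNilpotentSub br J) :
    IsAbelianSub br J := by
  have hbot : brSpan br J J = ⊥ :=
    hphi _ (isIdeal_brSpan_self br h hJ) fun M hM => brSpan_self_le_max br h hJ hnil hM
  intro a ha b hb
  have := mem_brSpan br ha hb
  rw [hbot] at this
  simpa using this

end Helpers3

section Helpers4

variable (br : L →ₗ[F] L →ₗ[F] L)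

lemma exists_complement [FiniteDimensional F L] (h : IsRightLeibniz br)
    (hphi : IsPhiFree br) :
    ∃ V, IsSubalg br V ∧ abelianSocle br ⊓ V = ⊥ ∧ abelianSocle br ⊔ V = ⊤ := by
  suffices H : ∀ n (B : Submodule F L), Module.finrank F B ≤ n → IsSubalg br B →
      abelianSocle br ⊔ B = ⊤ →
      ∃ V, IsSubalg br V ∧ abelianSocle br ⊓ V = ⊥ ∧ abelianSocle br ⊔ V = ⊤ by
    exact H (Module.finrank F L) ⊤ (Submodule.finrank_le ⊤) (isSubalg_top br) (by simp)
  intro n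
  induction n with
  | zero =>
    intro B hr hB hsup
    have hBbot : B = ⊥ := Submodule.finrank_eq_zero.1 (Nat.le_zero.1 hr)
    rw [hBbot] at hsup
    exact ⟨⊥, isSubalg_bot br, by simp, hsup⟩
  | succ n ih =>
    intro B hr hB hsup
    by_cases hint : abelianSocle br ⊓ B = ⊥
    · exact ⟨B, hB, hint, hsup⟩
    · have hABid : IsIdeal br (abelianSocle br ⊓ B) := by
        intro c hc x
        have hxmem : x ∈ abelianSocle br ⊔ B := by rw [hsup]; trivial
        obtain ⟨a, ha, b, hb, rfl⟩ := Submodule.mem_sup.1 hxmem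
        constructor
        · rw [map_add, asoc_abelian br c hc.1 a ha, zero_add]
          exact Submodule.mem_inf.2 ⟨(asoc_ideal br c hc.1 b).1, hB c hc.2 b hb⟩
        · rw [map_add, LinearMap.add_apply, asoc_abelian br a ha c hc.1, zero_add]
          exact Submodule.mem_inf.2 ⟨(asoc_ideal br c hc.1 b).2, hB b hb c hc.2⟩
      obtain ⟨D, hDle, hDid, hDne, hDmin⟩ := exists_minimal_ideal br hABid hint
      have hDab : IsAbelianSub br D := fun x hx y hy =>
        asoc_abelian br x ((hDle.trans inf_le_left) hx) y ((hDle.trans inf_le_left) hy)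
      have hDmem : IsMinAbelianIdeal br D := ⟨hDid, hDne, hDab, hDmin⟩
      have hexM : ∃ M, IsMaxSubalg br M ∧ ¬ D ≤ M := by
        by_contra hc
        push_neg at hc
        exact hDne (hphi D hDid hc)
      obtain ⟨M, hM, hDM⟩ := hexM
      have hMD_top : M ⊔ D = ⊤ := by
        by_contra hne
        have := hM.2.2 (M ⊔ D) (isSubalg_sup_ideal br hM.1 hDid) le_sup_left hne
        exact hDM (by rw [← this]; exact le_sup_right)
      have hMDbot : M ⊓ D = ⊥ := by
        have hid : IsIdeal br (M ⊓ D) := by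
          intro c hc x
          have hxmem : x ∈ M ⊔ D := by rw [hMD_top]; trivial
          obtain ⟨m, hm, d, hd, rfl⟩ := Submodule.mem_sup.1 hxmem
          constructor
          · rw [map_add, hDab c hc.2 d hd, add_zero]
            exact Submodule.mem_inf.2 ⟨hM.1 c hc.1 m hm, (hDid c hc.2 m).1⟩
          · rw [map_add, LinearMap.add_apply, hDab d hd c hc.2, add_zero]
            exact Submodule.mem_inf.2 ⟨hM.1 m hm c hc.1, (hDid c hc.2 m).2⟩
        by_contra hne
        have := hDmin (M ⊓ D) hid inf_le_right hne
        exact hDM (by rw [← this]; exact inf_le_left)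
      have hD_B : D ≤ B := hDle.trans inf_le_right
      have hBeq : B = D ⊔ (M ⊓ B) := by
        calc B = (D ⊔ M) ⊓ B := by rw [sup_comm D M, hMD_top, top_inf_eq]
          _ = D ⊔ (M ⊓ B) := sup_inf_assoc_of_le M hD_B
      have hDasoc : D ≤ abelianSocle br := le_sSup hDmem
      have hsup' : abelianSocle br ⊔ (B ⊓ M) = ⊤ := by
        rw [← hsup]
        conv_rhs => rw [hBeq]
        rw [inf_comm B M, ← sup_assoc, sup_comm (abelianSocle br) D, sup_assoc,
          sup_comm D (abelianSocle br ⊔ (M ⊓ B))]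
        rw [sup_eq_left.2 (hDasoc.trans le_sup_left)]
      have hlt : B ⊓ M < B := by
        refine lt_of_le_of_ne inf_le_left ?_
        intro heq
        have hDM' : D ≤ M := hD_B.trans (by rw [← heq]; exact inf_le_right)
        exact hDM hDM'
      have hfr : Module.finrank F (B ⊓ M : Submodule F L) ≤ n := by
        have h1 := Submodule.finrank_lt_finrank_of_lt hlt; omega
      exact ih (B ⊓ M) hfr (isSubalg_inf br hB hM.1) hsup'

lemma nilpotent_ideal_le_asoc [FiniteDimensional F L] (h : IsRightLeibniz br)
    (hphi : IsPhiFree br) {V : Submodule F L} (hV : IsSubalg br V)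
    (hiV : abelianSocle br ⊓ V = ⊥) (hsV : abelianSocle br ⊔ V = ⊤)
    {J : Submodule F L} (hJ : IsIdeal br J) (hnil : IsNilpotentSub br J) :
    J ≤ abelianSocle br := by
  have hJab : IsAbelianSub br J := nilpotent_ideal_abelian br h hphi hJ hnil
  have pair : ∀ A ∈ {A | IsMinAbelianIdeal br A}, ∀ a ∈ A, ∀ j ∈ J,
      br a j = 0 ∧ br j a = 0 := by
    intro A hA a ha j hj
    by_cases hAJ : A ⊓ J = ⊥
    · constructor
      · have hm : br a j ∈ A ⊓ J := ⟨(hA.1 a ha j).1, (hJ j hj a).2⟩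
        rw [hAJ] at hm; simpa using hm
      · have hm : br j a ∈ A ⊓ J := ⟨(hA.1 a ha j).2, (hJ j hj a).1⟩
        rw [hAJ] at hm; simpa using hm
    · have heq := hA.2.2.2 (A ⊓ J) (isIdeal_inf br hA.1 hJ) inf_le_left hAJ
      have hAle : A ≤ J := by rw [← heq]; exact inf_le_right
      exact ⟨hJab a (hAle ha) j hj, hJab j hj a (hAle ha)⟩
  have asocJ : ∀ x ∈ abelianSocle br, ∀ j ∈ J, br x j = 0 ∧ br j x = 0 := by
    intro x hx j hj
    constructor
    · exact sSup_br_zero_left br (fun A hA a ha => (pair A hA a ha j hj).1) x hx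
    · exact sSup_br_zero_right br (fun A hA a ha => (pair A hA a ha j hj).2) x hx
  set A := abelianSocle br with hAdef
  set K := A ⊔ J with hKdef
  have hAK : A ≤ K := le_sup_left
  have hKab : IsAbelianSub br K := by
    intro x hx y hy
    obtain ⟨a, ha, j, hj, rfl⟩ := Submodule.mem_sup.1 hx
    obtain ⟨a', ha', j', hj', rfl⟩ := Submodule.mem_sup.1 hy
    rw [map_add, map_add br a j, LinearMap.add_apply, LinearMap.add_apply,
      asoc_abelian br a ha a' ha', (asocJ a ha j' hj').1, (asocJ a' ha' j hj).2,
      hJab j hj j' hj']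
    simp
  have hKid : IsIdeal br K := isIdeal_sup br (asoc_ideal br) hJ
  set C := K ⊓ V with hCdef
  have hCid : IsIdeal br C := by
    intro c hc x
    have hxmem : x ∈ A ⊔ V := by rw [hsV]; trivial
    obtain ⟨a, ha, v, hv, rfl⟩ := Submodule.mem_sup.1 hxmem
    have haK : a ∈ K := hAK ha
    constructor
    · rw [map_add, hKab c hc.1 a haK, zero_add]
      exact Submodule.mem_inf.2 ⟨(hKid c hc.1 v).1, hV c hc.2 v hv⟩
    · rw [map_add, LinearMap.add_apply, hKab a haK c hc.1, zero_add]
      exact Submodule.mem_inf.2 ⟨(hKid c hc.1 v).2, hV v hv c hc.2⟩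
  have hCbot : C = ⊥ := by
    by_contra hne
    obtain ⟨D, hDle, hDid, hDne, hDmin⟩ := exists_minimal_ideal br hCid hne
    have hDab : IsAbelianSub br D := fun x hx y hy =>
      hKab x ((hDle.trans inf_le_left) hx) y ((hDle.trans inf_le_left) hy)
    have hDA : D ≤ A := le_sSup (⟨hDid, hDne, hDab, hDmin⟩ : IsMinAbelianIdeal br D)
    apply hDne
    rw [← le_bot_iff, ← hiV]
    exact le_inf hDA (hDle.trans inf_le_right)
  have hKA : K = A := by
    calc K = K ⊓ (A ⊔ V) := by rw [hsV, inf_top_eq]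
      _ = (A ⊔ V) ⊓ K := by rw [inf_comm]
      _ = A ⊔ (V ⊓ K) := sup_inf_assoc_of_le V hAK
      _ = A ⊔ C := by rw [inf_comm V K]
      _ = A := by rw [hCbot, sup_bot_eq]
  exact le_sup_right.trans hKA.le

end Helpers4

theorem phiFree_implies_almostReductive [CharZero F] [FiniteDimensional F L]
    (br : L →ₗ[F] L →ₗ[F] L) (h : IsRightLeibniz br) (hphi : IsPhiFree br) :
    ∃ N V : Submodule F L, IsAlmostReductive br N V ∧ N = abelianSocle br := by
  classical
  obtain ⟨V, hV, hiV, hsV⟩ := exists_complement br h hphi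
  set N := abelianSocle br with hNdef
  have hNid : IsIdeal br N := asoc_ideal br
  have hNab : IsAbelianSub br N := asoc_abelian br
  have hNnil : IsNilpotentSub br N := asoc_nilpotent br
  have hNmax : ∀ J, IsIdeal br J → IsNilpotentSub br J → J ≤ N := fun J hJ hn =>
    nilpotent_ideal_le_asoc br h hphi hV hiV hsV hJ hn
  refine ⟨N, V, ⟨⟨hNid, hNnil, hNmax⟩, hV, ?_, hiV, hsV, ?_⟩, rfl⟩
  · intro x hx
    have h1 : br x x ∈ kernelIdeal br := Submodule.subset_span ⟨x, rfl⟩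
    have h2 : kernelIdeal br ≤ N :=
      hNmax _ (kernel_isIdeal br h) (nilpotent_of_abelian br (kernel_abelian br h))
    have h3 : br x x ∈ V := hV x hx x hx
    have h4 : br x x ∈ N ⊓ V := ⟨h2 h1, h3⟩
    rw [hiV] at h4; simpa using h4
  · intro A' hA'le hA'bi
    have hA'id : IsIdeal br A' := by
      intro a ha x
      have hxmem : x ∈ N ⊔ V := by rw [hsV]; trivial
      obtain ⟨nn, hn, v, hvv, rfl⟩ := Submodule.mem_sup.1 hxmem
      constructor
      · rw [map_add, hNab a (hA'le ha) nn hn, zero_add]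
        exact (hA'bi a ha v hvv).1
      · rw [map_add, LinearMap.add_apply, hNab nn hn a (hA'le ha), zero_add]
        exact (hA'bi a ha v hvv).2
    set s : Set (Submodule F L) := {B | B ≤ N ∧ IsIdeal br B ∧ A' ⊓ B = ⊥} with hs
    have hbots : (⊥ : Submodule F L) ∈ s := ⟨bot_le, isIdeal_bot br, by simp⟩
    set t := (fun B : Submodule F L => Module.finrank F B) '' s with ht
    have htne : t.Nonempty := ⟨_, ⟨⊥, hbots, rfl⟩⟩
    have htb : BddAbove t := ⟨Module.finrank F L, by
      rintro _ ⟨B, hBmem, rfl⟩; exact Submodule.finrank_le B⟩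
    obtain ⟨B, hBs, hBrank⟩ := Nat.sSup_mem htne htb
    have hmax : ∀ B' ∈ s, Module.finrank F B' ≤ Module.finrank F B := by
      intro B' hB'
      have hBrank' : Module.finrank F B = sSup t := hBrank
      rw [hBrank']; exact le_csSup htb ⟨B', hB', rfl⟩
    refine ⟨B, hBs.1, fun b hb st hst => hBs.2.1 b hb st, hBs.2.2, ?_⟩
    refine le_antisymm (sup_le hA'le hBs.1) ?_
    apply sSup_le
    intro A hA
    by_contra hnle
    have hinter : A ⊓ (A' ⊔ B) = ⊥ := by
      have hi : IsIdeal br (A ⊓ (A' ⊔ B)) :=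
        isIdeal_inf br hA.1 (isIdeal_sup br hA'id hBs.2.1)
      by_contra hne
      exact hnle (by rw [← hA.2.2.2 _ hi inf_le_left hne]; exact inf_le_right)
    have hB's : B ⊔ A ∈ s := by
      refine ⟨sup_le hBs.1 (le_sSup hA), isIdeal_sup br hBs.2.1 hA.1, ?_⟩
      rw [eq_bot_iff]
      intro x hx
      obtain ⟨hx1, hx2⟩ := Submodule.mem_inf.1 hx
      obtain ⟨b, hbB, a, haA, rfl⟩ := Submodule.mem_sup.1 hx2
      have haz : a ∈ A ⊓ (A' ⊔ B) := by
        refine ⟨haA, ?_⟩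
        have he : a = (b + a) - b := by abel
        rw [he]
        exact sub_mem (Submodule.mem_sup_left hx1) (Submodule.mem_sup_right hbB)
      rw [hinter] at haz
      have ha0 : a = 0 := by simpa using haz
      rw [ha0, add_zero] at hx1 ⊢
      have hbb : b ∈ A' ⊓ B := ⟨hx1, hbB⟩
      rw [hBs.2.2] at hbb
      exact hbb
    have hBeq : B ⊔ A = B :=
      (Submodule.eq_of_le_of_finrank_le le_sup_left (hmax _ hB's)).symm
    exact hnle (le_sup_right.trans (hBeq.le.trans le_sup_right))


end LeibnizPaper
end

section
/- Every φ-free symmetric Leibniz algebra over a field of characteristic zero is a Lie algebra; more generally, every φ-free Leibniz algebra L with I ⊆ Z(L) is a Lie algebra. -/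
namespace LeibnizPaper

variable {F L : Type*} [Field F] [AddCommGroup L] [Module F L]

theorem phiFree_central_kernel_lie [CharZero F] [FiniteDimensional F L]
    (br : L →ₗ[F] L →ₗ[F] L) (h : IsRightLeibniz br) (hphi : IsPhiFree br)
    (hcent : ∀ i ∈ kernelIdeal br, ∀ x : L, br i x = 0 ∧ br x i = 0) :
    ∀ x : L, br x x = 0 := by
  have hI : IsIdeal br (kernelIdeal br) := by
    intro x hx y
    exact ⟨by rw [(hcent x hx y).1]; exact Submodule.zero_mem _,
      by rw [(hcent x hx y).2]; exact Submodule.zero_mem _⟩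
  have key : ∀ M, IsMaxSubalg br M → kernelIdeal br ≤ M := by
    intro M hM
    by_cases hle : kernelIdeal br ≤ M
    · exact hle
    have hsub : IsSubalg br (M ⊔ kernelIdeal br) := by
      intro x hx y hy
      obtain ⟨m, hm, i, hi, rfl⟩ := Submodule.mem_sup.mp hx
      obtain ⟨m', hm', i', hi', rfl⟩ := Submodule.mem_sup.mp hy
      have : br (m + i) (m' + i') = br m m' := by
        simp [map_add, (hcent i hi m').1, (hcent i hi i').1, (hcent i' hi' m).2]
      rw [this]
      exact Submodule.mem_sup_left (hM.1 m hm m' hm')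
    have htop : M ⊔ kernelIdeal br = ⊤ := by
      by_contra hne
      have heq := hM.2.2 _ hsub le_sup_left hne
      exact hle (heq ▸ le_sup_right)
    rw [kernelIdeal, Submodule.span_le]
    rintro _ ⟨x, rfl⟩
    have hx : x ∈ M ⊔ kernelIdeal br := htop ▸ Submodule.mem_top
    obtain ⟨m, hm, i, hi, rfl⟩ := Submodule.mem_sup.mp hx
    have : br (m + i) (m + i) = br m m := by
      simp [map_add, (hcent i hi m).1, (hcent i hi i).1, (hcent i hi m).2]
    rw [this]
    exact hM.1 m hm m hm
  have hbot := hphi _ hI key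
  intro x
  have hxx : br x x ∈ kernelIdeal br := Submodule.subset_span ⟨x, rfl⟩
  rw [hbot] at hxx
  simpa using hxx

end LeibnizPaper
end
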